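/- For every odd prime p, every k ∈ ZMod p with k ≠ 0, all i, i' ∈ (ZMod p) ∪ {∞} and all j, j' ∈ ZMod p: if i ≠ i' then |⟨ψ_{k;i,j}, ψ_{k;i',j'}⟩| = 1/√p, while if i = i' then |⟨ψ_{k;i,j}, ψ_{k;i',j'}⟩| equals 1 when j = j' and 0 when j ≠ j'. In particular, for each fixed k the p+1 families {ψ_{k;i,j}}_{j ∈ ZMod p}, i ∈ (ZMod p) ∪ {∞}, form p+1 mutually unbiased orthonormal bases of ℂ^{ZMod p}. -/

import Mathlib

/-!
Write `e(v) = ω^v`, an additive character of `ZMod p`. For finite `i, i'` the inner product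
`⟨ψ_{k;i,j}, ψ_{k;i',j'}⟩` is `p⁻¹ ∑_μ e(a μ² + b μ)` with `a = -k (i' - i) / 2`. For `a = 0` this
is orthogonality of characters. For `a ≠ 0` it is a quadratic Gauss sum of modulus `√p`: expanding
`|∑_x e(q x)|²` and substituting `x = y + t` gives `∑_t e(q t) ∑_y e(2 a t y)`, and only `t = 0`
survives because `2a` is invertible. The vectors `ψ_{k;∞,j}` are standard basis vectors, so their
inner products with the others are single entries.
-/

/-- `ω^v = exp(2πi·v.val/p)` for `v : ZMod p`, where `ω = exp(2πi/p)`. -/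
noncomputable def omegaPow (p : ℕ) (v : ZMod p) : ℂ :=
  Complex.exp (2 * Real.pi * Complex.I * (v.val : ℂ) / p)

/-- The unit vectors `ψ_{k;i,j} ∈ ℂ^{ZMod p}`:
`ψ_{k;i,j} = p^{-1/2} ∑_μ ω^{-k((μ(μ-1)/2)i + μj)} e_μ` for `i ∈ ZMod p`, and
`ψ_{k;∞,j} = e_{-j}`. -/
noncomputable def psi (p : ℕ) (k : ZMod p) : Option (ZMod p) → ZMod p → ZMod p → ℂ
  | some i, j => fun μ =>
      ((Real.sqrt p : ℝ) : ℂ)⁻¹ *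
        omegaPow p (-(k * (μ * (μ - 1) * (2 : ZMod p)⁻¹ * i + μ * j)))
  | none, j => fun μ => if μ = -j then 1 else 0

open Finset ComplexConjugate

namespace AddChar

variable {R : Type*} [CommRing R] [Fintype R] {ψ : AddChar R ℂ}

theorem norm_sum_quadratic_eq_sqrt_card (hψ : ψ.IsPrimitive) {a : R} (ha : IsUnit (2 * a))
    (b : R) :
    ‖∑ x, ψ (a * x ^ 2 + b * x)‖ = √(Fintype.card R) := by
  classical
  set q : R → R := fun x ↦ a * x ^ 2 + b * x
  have hshift (t y : R) : q (t + y) - q y = q t + y * (2 * a * t) := by simp only [q]; ring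
  have hsq : (∑ x, ψ (q x)) * conj (∑ x, ψ (q x)) = Fintype.card R :=
    calc (∑ x, ψ (q x)) * conj (∑ x, ψ (q x))
        = ∑ y, ∑ t, ψ (q (t + y) - q y) := by
          rw [map_sum, sum_mul_sum, sum_comm]
          refine sum_congr rfl fun y _ ↦ ?_
          rw [← Equiv.sum_comp (Equiv.addRight y)]
          simp [sub_eq_add_neg, map_add_eq_mul, map_neg_eq_conj]
      _ = ∑ t, ψ (q t) * ∑ y, ψ (y * (2 * a * t)) := by
          simp_rw [hshift, map_add_eq_mul, mul_sum]
          exact sum_comm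
      _ = Fintype.card R := by
          simp_rw [sum_mulShift _ hψ, ha.mul_right_eq_zero]
          simp [q]
  rw [Complex.mul_conj, ← Complex.ofReal_natCast, Complex.ofReal_inj,
    Complex.normSq_eq_norm_sq] at hsq
  rw [← hsq, Real.sqrt_sq (norm_nonneg _)]

end AddChar

section Heisenberg

variable {p : ℕ} [NeZero p]

theorem omegaPow_eq_stdAddChar (v : ZMod p) : omegaPow p v = ZMod.stdAddChar v := by
  rw [ZMod.stdAddChar_apply, ZMod.toCircle_apply, omegaPow]

theorem norm_psi_some (k i j μ : ZMod p) : ‖psi p k (some i) j μ‖ = 1 / √p := by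
  simp [psi, omegaPow_eq_stdAddChar, AddChar.norm_apply]

theorem inner_psi_none_left (k : ZMod p) (i' : Option (ZMod p)) (j j' : ZMod p) :
    ∑ μ, conj (psi p k none j μ) * psi p k i' j' μ = psi p k i' j' (-j) := by
  simp [psi, apply_ite conj]

theorem inner_psi_none_right (k : ZMod p) (i : Option (ZMod p)) (j j' : ZMod p) :
    ∑ μ, conj (psi p k i j μ) * psi p k none j' μ = conj (psi p k i j (-j')) := by
  simp [psi]

theorem inner_psi_some_some (k i i' j j' : ZMod p) :
    ∑ μ, conj (psi p k (some i) j μ) * psi p k (some i') j' μ =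
      (p : ℂ)⁻¹ * ∑ μ, ZMod.stdAddChar
        (-(k * (i' - i) * 2⁻¹) * μ ^ 2 + (k * (i' - i) * 2⁻¹ - k * (j' - j)) * μ) := by
  rw [mul_sum]
  refine sum_congr rfl fun μ _ ↦ ?_
  simp only [psi, omegaPow_eq_stdAddChar, map_mul, map_inv₀, Complex.conj_ofReal,
    ← AddChar.map_neg_eq_conj]
  rw [mul_mul_mul_comm, ← mul_inv, ← Complex.ofReal_mul, Real.mul_self_sqrt (Nat.cast_nonneg p),
    Complex.ofReal_natCast, ← AddChar.map_add_eq_mul]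
  congr 2
  ring

variable [Fact p.Prime] {k : ZMod p}

theorem norm_inner_psi_some_of_ne (h2 : (2 : ZMod p) ≠ 0) (hk : k ≠ 0) {i i' : ZMod p}
    (hi : i ≠ i') (j j' : ZMod p) :
    ‖∑ μ, conj (psi p k (some i) j μ) * psi p k (some i') j' μ‖ = 1 / √p := by
  have hunit : IsUnit (2 * -(k * (i' - i) * 2⁻¹)) := by
    rw [isUnit_iff_ne_zero, mul_neg, mul_left_comm, mul_inv_cancel₀ h2, mul_one]
    exact neg_ne_zero.2 (mul_ne_zero hk (sub_ne_zero.2 hi.symm))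
  rw [inner_psi_some_some, norm_mul,
    AddChar.norm_sum_quadratic_eq_sqrt_card (ZMod.isPrimitive_stdAddChar p) hunit, ZMod.card,
    norm_inv, Complex.norm_natCast, inv_mul_eq_div, Real.sqrt_div_self']

theorem norm_inner_psi_some_self (hk : k ≠ 0) (i j j' : ZMod p) :
    ‖∑ μ, conj (psi p k (some i) j μ) * psi p k (some i) j' μ‖ =
      if j = j' then 1 else 0 := by
  have harg (μ : ZMod p) :
      -(k * (i - i) * 2⁻¹) * μ ^ 2 + (k * (i - i) * 2⁻¹ - k * (j' - j)) * μ =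
        μ * -(k * (j' - j)) := by
    ring
  have hb : -(k * (j' - j)) = 0 ↔ j = j' := by simp [hk, sub_eq_zero, eq_comm]
  simp_rw [inner_psi_some_some, harg, AddChar.sum_mulShift _ (ZMod.isPrimitive_stdAddChar p), hb,
    ZMod.card]
  split_ifs <;> simp

end Heisenberg

/-- For every odd prime `p`, every `k ≠ 0`, all `i,i' ∈ ZMod p ∪ {∞}`
and all `j,j' ∈ ZMod p`: if `i ≠ i'` then `|⟨ψ_{k;i,j}, ψ_{k;i',j'}⟩| = 1/√p`, while if
`i = i'` then the absolute value of the inner product is `1` for `j = j'` and `0` for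
`j ≠ j'`.  (Thus for fixed `k` the `p+1` families `{ψ_{k;i,j}}_j` form `p+1` mutually
unbiased orthonormal bases of `ℂ^{ZMod p}`.) -/
theorem heisenberg_psi_mub (p : ℕ) [NeZero p] (hp : p.Prime) (ho : Odd p)
    (k : ZMod p) (hk : k ≠ 0) (i i' : Option (ZMod p)) (j j' : ZMod p) :
    (i ≠ i' →
      ‖∑ μ : ZMod p, (starRingEnd ℂ) (psi p k i j μ) * psi p k i' j' μ‖ =
        1 / Real.sqrt p) ∧
    (i = i' →
      ‖∑ μ : ZMod p, (starRingEnd ℂ) (psi p k i j μ) * psi p k i' j' μ‖ =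
        if j = j' then 1 else 0) := by
  have : Fact p.Prime := ⟨hp⟩
  have h2 : (2 : ZMod p) ≠ 0 := Ring.two_ne_zero <| by
    rw [ZMod.ringChar_zmod_n]
    rintro rfl
    exact Nat.not_odd_iff_even.2 even_two ho
  refine ⟨fun hi ↦ ?_, fun hi ↦ ?_⟩
  · rcases i with _ | i <;> rcases i' with _ | i'
    · exact absurd rfl hi
    · rw [inner_psi_none_left, norm_psi_some]
    · rw [inner_psi_none_right, Complex.norm_conj, norm_psi_some]
    · exact norm_inner_psi_some_of_ne h2 hk (hi <| congrArg some ·) j j'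
  · subst hi
    rcases i with _ | i
    · rw [inner_psi_none_left]
      by_cases h : j = j' <;> simp [psi, h]
    · exact norm_inner_psi_some_self hk i j j'
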